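/- arXiv:1810.01923 — 5 statements merged into one kernel-verified Lean document; each statement's English description precedes it below -/
import Mathlib

section
/- Let f : ℝ^n → ℝ ∪ {+∞} be a proper, convex, lower semicontinuous function and let x ∈ ℝ^n. If u is the unique minimizer over ℝ^n of y ↦ f(y) + (1/2)‖y − x‖² and v is the unique minimizer over ℝ^n of y ↦ f*(y) + (1/2)‖y − x‖², then u + v = x (Moreau decomposition prox_f(x) + prox_{f*}(x) = x). -/
/-- The Fenchel conjugate of `f : ℝ^n → ℝ ∪ {+∞}` (values in `EReal`):
`f*(y) = sup_z (⟨y, z⟩ - f z)`. -/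
noncomputable def fenchelConj {n : ℕ} (f : EuclideanSpace ℝ (Fin n) → EReal)
    (y : EuclideanSpace ℝ (Fin n)) : EReal :=
  ⨆ z : EuclideanSpace ℝ (Fin n), ((inner ℝ y z : ℝ) : EReal) - f z

/-!
Testing the minimality of `u = prox_f x` against the points `(1 - t) • u + t • z` and letting
`t → 0⁺` gives `f u ≤ f z + ⟪u - x, z - u⟫`, i.e. `x - u` is a subgradient of `f` at `u`. Hence
the supremum defining `f* (x - u)` is attained at `u`, while `f* y ≥ ⟪y, u⟫ - f u` for every `y`;
since `⟪y, u⟫ + ½‖y - x‖² - (⟪x - u, u⟫ + ½‖u‖²) = ½‖y - x + u‖² ≥ 0`, the point `x - u`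
minimizes `f* + ½‖· - x‖²`, so it is `prox_{f*} x` by uniqueness.
-/

open Filter Set Topology
open scoped RealInnerProductSpace

section InnerProductSpace

variable {E : Type*} [NormedAddCommGroup E]

def IsProxPoint (f : E → EReal) (x u : E) : Prop :=
  ∀ y, f u + ((1 / 2 * ‖u - x‖ ^ 2 : ℝ) : EReal) ≤ f y + ((1 / 2 * ‖y - x‖ ^ 2 : ℝ) : EReal)

lemma IsProxPoint.ne_top {f : E → EReal} {x u z : E} (hu : IsProxPoint f x u) (hz : f z ≠ ⊤) :
    f u ≠ ⊤ := by
  intro h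
  have := hu z
  rw [h, EReal.top_add_of_ne_bot (EReal.coe_ne_bot _), top_le_iff] at this
  exact EReal.add_lt_top hz (EReal.coe_ne_top _) |>.ne this

variable [InnerProductSpace ℝ E]

lemma le_add_inner_of_forall_convexCombination_le {a b : ℝ} {x u z : E}
    (h : ∀ t ∈ Ioo (0 : ℝ) 1,
      a + 1 / 2 * ‖u - x‖ ^ 2 ≤ (1 - t) * a + t * b + 1 / 2 * ‖(1 - t) • u + t • z - x‖ ^ 2) :
    a ≤ b + ⟪u - x, z - u⟫ := by
  have hslope : ∀ t ∈ Ioo (0 : ℝ) 1, a ≤ b + ⟪u - x, z - u⟫ + t / 2 * ‖z - u‖ ^ 2 := by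
    intro t ht
    have hexpand : ‖(1 - t) • u + t • z - x‖ ^ 2
        = ‖u - x‖ ^ 2 + 2 * (t * ⟪u - x, z - u⟫) + t ^ 2 * ‖z - u‖ ^ 2 := by
      rw [show (1 - t) • u + t • z - x = (u - x) + t • (z - u) by module, norm_add_sq_real,
        real_inner_smul_right, norm_smul, Real.norm_of_nonneg ht.1.le]
      ring
    have := h t ht
    rw [hexpand] at this
    nlinarith [ht.1]
  have hlim : Tendsto (fun t : ℝ ↦ b + ⟪u - x, z - u⟫ + t / 2 * ‖z - u‖ ^ 2) (𝓝[>] 0)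
      (𝓝 (b + ⟪u - x, z - u⟫)) := by
    refine tendsto_nhdsWithin_of_tendsto_nhds ?_
    simpa using ((continuous_id.div_const 2).mul continuous_const).const_add
      (b + ⟪u - x, z - u⟫) |>.tendsto 0
  exact ge_of_tendsto hlim (mem_of_superset (Ioo_mem_nhdsGT one_pos) hslope)

lemma inner_sub_add_half_sq_le (x u y : E) :
    ⟪x - u, u⟫ + 1 / 2 * ‖u‖ ^ 2 ≤ ⟪y, u⟫ + 1 / 2 * ‖y - x‖ ^ 2 := by
  have h := norm_add_sq_real (y - x) u
  rw [inner_sub_left] at h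
  rw [inner_sub_left, real_inner_self_eq_norm_sq]
  nlinarith [sq_nonneg ‖y - x + u‖]

lemma IsProxPoint.inner_sub_le {f : E → EReal} {x u : E} (hu : IsProxPoint f x u)
    (hbot : ∀ z, f z ≠ ⊥)
    (hconv : ∀ (y z : E) (a b : ℝ), 0 ≤ a → 0 ≤ b → a + b = 1 →
      f (a • y + b • z) ≤ (a : EReal) * f y + (b : EReal) * f z)
    (hfu : f u ≠ ⊤) (z : E) :
    ((⟪x - u, z⟫ : ℝ) : EReal) - f z ≤ ((⟪x - u, u⟫ : ℝ) : EReal) - f u := by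
  by_cases hfz : f z = ⊤
  · simp [hfz, EReal.sub_top]
  obtain ⟨a, ha⟩ : ∃ a : ℝ, f u = a := ⟨_, (EReal.coe_toReal hfu (hbot u)).symm⟩
  obtain ⟨b, hb⟩ : ∃ b : ℝ, f z = b := ⟨_, (EReal.coe_toReal hfz (hbot z)).symm⟩
  have hvar : a ≤ b + ⟪u - x, z - u⟫ := le_add_inner_of_forall_convexCombination_le fun t ht ↦ by
    have := (hu ((1 - t) • u + t • z)).trans
      (add_le_add_left (hconv u z (1 - t) t (by linarith [ht.2]) ht.1.le (by ring)) _)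
    rw [ha, hb] at this
    exact_mod_cast this
  have hinner : ⟪u - x, z - u⟫ = ⟪x - u, u⟫ - ⟪x - u, z⟫ := by
    rw [← neg_sub x u, inner_neg_left, inner_sub_right]
    ring
  rw [ha, hb]
  norm_cast
  linarith

end InnerProductSpace

section FenchelConj

variable {n : ℕ} {f : EuclideanSpace ℝ (Fin n) → EReal}

lemma inner_sub_le_fenchelConj (y z : EuclideanSpace ℝ (Fin n)) :
    ((⟪y, z⟫ : ℝ) : EReal) - f z ≤ fenchelConj f y :=
  le_iSup (fun z ↦ ((⟪y, z⟫ : ℝ) : EReal) - f z) z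

lemma fenchelConj_eq_of_forall_le {y u : EuclideanSpace ℝ (Fin n)}
    (h : ∀ z, ((⟪y, z⟫ : ℝ) : EReal) - f z ≤ ((⟪y, u⟫ : ℝ) : EReal) - f u) :
    fenchelConj f y = ((⟪y, u⟫ : ℝ) : EReal) - f u :=
  le_antisymm (iSup_le h) (inner_sub_le_fenchelConj y u)

lemma IsProxPoint.fenchelConj_sub {x u : EuclideanSpace ℝ (Fin n)} (hu : IsProxPoint f x u)
    (hbot : ∀ z, f z ≠ ⊥)
    (hconv : ∀ (y z : EuclideanSpace ℝ (Fin n)) (a b : ℝ), 0 ≤ a → 0 ≤ b → a + b = 1 →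
      f (a • y + b • z) ≤ (a : EReal) * f y + (b : EReal) * f z)
    (hfu : f u ≠ ⊤) :
    IsProxPoint (fenchelConj f) x (x - u) := by
  obtain ⟨a, ha⟩ : ∃ a : ℝ, f u = a := ⟨_, (EReal.coe_toReal hfu (hbot u)).symm⟩
  intro y
  rw [fenchelConj_eq_of_forall_le (hu.inner_sub_le hbot hconv hfu)]
  calc ((⟪x - u, u⟫ : ℝ) : EReal) - f u + ((1 / 2 * ‖x - u - x‖ ^ 2 : ℝ) : EReal)
      ≤ ((⟪y, u⟫ : ℝ) : EReal) - f u + ((1 / 2 * ‖y - x‖ ^ 2 : ℝ) : EReal) := by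
        rw [ha, sub_sub_cancel_left, norm_neg]
        norm_cast
        linarith [inner_sub_add_half_sq_le x u y]
    _ ≤ _ := add_le_add_left (inner_sub_le_fenchelConj y u) _

end FenchelConj

theorem moreau_decomposition_general {n : ℕ} (f : EuclideanSpace ℝ (Fin n) → EReal)
    (hproper : ∃ z, f z ≠ ⊤) (hnotbot : ∀ z, f z ≠ ⊥)
    (hconv : ∀ (y z : EuclideanSpace ℝ (Fin n)) (a b : ℝ), 0 ≤ a → 0 ≤ b → a + b = 1 →
      f (a • y + b • z) ≤ (a : EReal) * f y + (b : EReal) * f z)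
    (x u v : EuclideanSpace ℝ (Fin n))
    (hu_min : ∀ y, f u + (((1 : ℝ)/2 * ‖u - x‖ ^ 2 : ℝ) : EReal)
      ≤ f y + (((1 : ℝ)/2 * ‖y - x‖ ^ 2 : ℝ) : EReal))
    (hv_unique : ∀ v', (∀ y, fenchelConj f v' + (((1 : ℝ)/2 * ‖v' - x‖ ^ 2 : ℝ) : EReal)
      ≤ fenchelConj f y + (((1 : ℝ)/2 * ‖y - x‖ ^ 2 : ℝ) : EReal)) → v' = v) :
    u + v = x := by
  have hu : IsProxPoint f x u := hu_min
  obtain ⟨z, hz⟩ := hproper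
  rw [← hv_unique (x - u) (hu.fenchelConj_sub hnotbot hconv (hu.ne_top hz)), add_sub_cancel]

/-- Moreau decomposition: `prox_f(x) + prox_{f*}(x) = x` for a proper convex
lower semicontinuous `f : ℝ^n → ℝ ∪ {+∞}`. -/
theorem moreau_decomposition {n : ℕ} (f : EuclideanSpace ℝ (Fin n) → EReal)
    (hproper : ∃ z, f z ≠ ⊤) (hnotbot : ∀ z, f z ≠ ⊥)
    (hconv : ∀ (y z : EuclideanSpace ℝ (Fin n)) (a b : ℝ), 0 ≤ a → 0 ≤ b → a + b = 1 →
      f (a • y + b • z) ≤ (a : EReal) * f y + (b : EReal) * f z)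
    (hlsc : LowerSemicontinuous f)
    (x u v : EuclideanSpace ℝ (Fin n))
    (hu_min : ∀ y, f u + (((1 : ℝ)/2 * ‖u - x‖ ^ 2 : ℝ) : EReal)
      ≤ f y + (((1 : ℝ)/2 * ‖y - x‖ ^ 2 : ℝ) : EReal))
    (hu_unique : ∀ u', (∀ y, f u' + (((1 : ℝ)/2 * ‖u' - x‖ ^ 2 : ℝ) : EReal)
      ≤ f y + (((1 : ℝ)/2 * ‖y - x‖ ^ 2 : ℝ) : EReal)) → u' = u)
    (hv_min : ∀ y, fenchelConj f v + (((1 : ℝ)/2 * ‖v - x‖ ^ 2 : ℝ) : EReal)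
      ≤ fenchelConj f y + (((1 : ℝ)/2 * ‖y - x‖ ^ 2 : ℝ) : EReal))
    (hv_unique : ∀ v', (∀ y, fenchelConj f v' + (((1 : ℝ)/2 * ‖v' - x‖ ^ 2 : ℝ) : EReal)
      ≤ fenchelConj f y + (((1 : ℝ)/2 * ‖y - x‖ ^ 2 : ℝ) : EReal)) → v' = v) :
    u + v = x :=
  moreau_decomposition_general f hproper hnotbot hconv x u v hu_min hv_unique
end

section
/- Let a, b > 0 and A, B₁, B₂ ∈ ℝ^{n×n} be such that H₁ = A + √(ab) B₁ and H₂ = A + √(ab) B₂ are invertible. Then the block matrix 𝔅 = [[A, −b B₂], [a B₁, A + √(ab)(B₁ + B₂)]] is invertible and its inverse is [[H₁⁻¹ + H₂⁻¹ − H₂⁻¹ A H₁⁻¹, √(b/a)(I − H₂⁻¹ A) H₁⁻¹], [−√(a/b) H₂⁻¹ (I − A H₁⁻¹), H₂⁻¹ A H₁⁻¹]]. -/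
/-!
Write `s = √(ab)` and `Cᵢ = s Bᵢ`, so that `Hᵢ = A + Cᵢ`. Conjugating by `diag(I, √(a/b) I)`
turns `𝔅` into `N = [[A, -C₂], [C₁, A + C₁ + C₂]]`, because `√(a/b) s = a` and `√(b/a) s = b`.
Elementary block row and column operations factor `N` as
`[[I, 0], [-I, I]] * [[A, -H₂], [H₁, 0]] * [[I, I], [0, I]]`, and the middle factor has the
inverse `[[0, H₁⁻¹], [-H₂⁻¹, H₂⁻¹ A H₁⁻¹]]`.
-/

open Matrix

namespace Matrix

variable {m n α : Type*} [Fintype m] [Fintype n] [DecidableEq m] [DecidableEq n]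

section Ring

variable [Ring α]

theorem fromBlocks_antidiag_mul_eq_one {A H₁ H₂ K₁ K₂ : Matrix n n α}
    (h₁ : H₁ * K₁ = 1) (h₂ : H₂ * K₂ = 1) :
    fromBlocks A (-H₂) H₁ 0 * fromBlocks 0 K₁ (-K₂) (K₂ * A * K₁) = 1 := by
  rw [fromBlocks_multiply, ← fromBlocks_one]
  congr 1
  · rw [Matrix.mul_zero, zero_add, neg_mul_neg, h₂]
  · rw [neg_mul, ← Matrix.mul_assoc, ← Matrix.mul_assoc, h₂, Matrix.one_mul, add_neg_cancel]
  · rw [Matrix.mul_zero, Matrix.zero_mul, add_zero]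
  · rw [h₁, Matrix.zero_mul, add_zero]

theorem fromBlocks_eq_mul_antidiag_mul (A C₁ C₂ : Matrix n n α) :
    fromBlocks A (-C₂) C₁ (A + C₁ + C₂) =
      fromBlocks 1 0 (-1) 1 * fromBlocks A (-(A + C₂)) (A + C₁) 0 * fromBlocks 1 1 0 1 := by
  simp only [fromBlocks_multiply]
  congr 1 <;> noncomm_ring

theorem fromBlocks_inverse_eq_mul_antidiag_mul (A K₁ K₂ : Matrix n n α) :
    fromBlocks (K₁ + K₂ - K₂ * A * K₁) ((1 - K₂ * A) * K₁) (-(K₂ * (1 - A * K₁)))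
        (K₂ * A * K₁) =
      fromBlocks 1 (-1) 0 1 * fromBlocks 0 K₁ (-K₂) (K₂ * A * K₁) * fromBlocks 1 0 1 1 := by
  simp only [fromBlocks_multiply]
  congr 1 <;> noncomm_ring

theorem fromBlocks_mul_inverse_eq_one {A C₁ C₂ K₁ K₂ : Matrix n n α}
    (h₁ : (A + C₁) * K₁ = 1) (h₂ : (A + C₂) * K₂ = 1) :
    fromBlocks A (-C₂) C₁ (A + C₁ + C₂) *
      fromBlocks (K₁ + K₂ - K₂ * A * K₁) ((1 - K₂ * A) * K₁) (-(K₂ * (1 - A * K₁)))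
        (K₂ * A * K₁) = 1 := by
  have hcol :
      fromBlocks (1 : Matrix n n α) 1 0 1 * fromBlocks 1 (-1) 0 (1 : Matrix n n α) = 1 := by
    rw [fromBlocks_multiply, ← fromBlocks_one]; congr 1 <;> noncomm_ring
  have hrow :
      fromBlocks (1 : Matrix n n α) 0 (-1) 1 * fromBlocks 1 0 1 (1 : Matrix n n α) = 1 := by
    rw [fromBlocks_multiply, ← fromBlocks_one]; congr 1 <;> noncomm_ring
  rw [fromBlocks_eq_mul_antidiag_mul, fromBlocks_inverse_eq_mul_antidiag_mul,
    Matrix.mul_assoc _ (fromBlocks 1 1 0 1), ← Matrix.mul_assoc (fromBlocks 1 1 0 1),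
    ← Matrix.mul_assoc (fromBlocks 1 1 0 1), hcol, Matrix.one_mul, Matrix.mul_assoc,
    ← Matrix.mul_assoc (fromBlocks A _ _ _), fromBlocks_antidiag_mul_eq_one h₁ h₂,
    Matrix.one_mul, hrow]

end Ring

theorem fromBlocks_smul_offDiag_mul_eq_one {𝕜 : Type*} [Field 𝕜] {c : 𝕜} (hc : c ≠ 0)
    {A A' : Matrix m m 𝕜} {B B' : Matrix m n 𝕜} {C C' : Matrix n m 𝕜} {D D' : Matrix n n 𝕜}
    (h : fromBlocks A B C D * fromBlocks A' B' C' D' = 1) :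
    fromBlocks A (c⁻¹ • B) (c • C) D * fromBlocks A' (c⁻¹ • B') (c • C') D' = 1 := by
  rw [fromBlocks_multiply, ← fromBlocks_one, fromBlocks_inj] at h ⊢
  obtain ⟨h₁₁, h₁₂, h₂₁, h₂₂⟩ := h
  simp only [Matrix.mul_smul, Matrix.smul_mul, smul_smul, inv_mul_cancel₀ hc,
    mul_inv_cancel₀ hc, one_smul, ← smul_add, h₁₁, h₁₂, h₂₁, h₂₂, smul_zero, and_self]

end Matrix

/-- Explicit inverse of the preconditioner block matrix
`𝔅 = [[A, −b B₂], [a B₁, A + √(ab)(B₁+B₂)]]` when `H₁ = A + √(ab) B₁` and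
`H₂ = A + √(ab) B₂` are invertible. -/
theorem preconditioner_block_inverse {n : ℕ} (a b : ℝ) (ha : 0 < a) (hb : 0 < b)
    (A B₁ B₂ : Matrix (Fin n) (Fin n) ℝ)
    (hH₁ : IsUnit (A + Real.sqrt (a*b) • B₁))
    (hH₂ : IsUnit (A + Real.sqrt (a*b) • B₂)) :
    IsUnit (fromBlocks A (-(b • B₂)) (a • B₁) (A + Real.sqrt (a*b) • (B₁ + B₂))) ∧
    (fromBlocks A (-(b • B₂)) (a • B₁) (A + Real.sqrt (a*b) • (B₁ + B₂)))⁻¹ =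
      fromBlocks
        ((A + Real.sqrt (a*b) • B₁)⁻¹ + (A + Real.sqrt (a*b) • B₂)⁻¹
          - (A + Real.sqrt (a*b) • B₂)⁻¹ * A * (A + Real.sqrt (a*b) • B₁)⁻¹)
        (Real.sqrt (b/a) • ((1 - (A + Real.sqrt (a*b) • B₂)⁻¹ * A) * (A + Real.sqrt (a*b) • B₁)⁻¹))
        (-(Real.sqrt (a/b) • ((A + Real.sqrt (a*b) • B₂)⁻¹ * (1 - A * (A + Real.sqrt (a*b) • B₁)⁻¹))))
        ((A + Real.sqrt (a*b) • B₂)⁻¹ * A * (A + Real.sqrt (a*b) • B₁)⁻¹) := by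
  set s := Real.sqrt (a * b)
  have hc : Real.sqrt (a / b) ≠ 0 := (Real.sqrt_pos.mpr (div_pos ha hb)).ne'
  have hc_inv : (Real.sqrt (a / b))⁻¹ = Real.sqrt (b / a) := by
    rw [← Real.sqrt_inv, inv_div]
  have hcs₁ : Real.sqrt (a / b) * s = a := by
    rw [← Real.sqrt_mul (div_pos ha hb).le, show a / b * (a * b) = a * a by field_simp,
      Real.sqrt_mul_self ha.le]
  have hcs₂ : Real.sqrt (b / a) * s = b := by
    rw [← Real.sqrt_mul (div_pos hb ha).le, show b / a * (a * b) = b * b by field_simp,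
      Real.sqrt_mul_self hb.le]
  have hM := fromBlocks_smul_offDiag_mul_eq_one hc <| fromBlocks_mul_inverse_eq_one
    (mul_nonsing_inv _ ((isUnit_iff_isUnit_det _).mp hH₁))
    (mul_nonsing_inv _ ((isUnit_iff_isUnit_det _).mp hH₂))
  rw [hc_inv, smul_neg, smul_neg, smul_smul, smul_smul, hcs₁, hcs₂, add_assoc, ← smul_add] at hM
  exact ⟨(isUnit_iff_isUnit_det _).mpr (isUnit_det_of_right_inverse hM), inv_eq_right_inv hM⟩
end

section
/- Let M, K ∈ ℝ^{n×n}, α > 0, and suppose Q = M + √α K is invertible. Given r₁, r₂ ∈ ℝ^n, let g = Q⁻¹(r₁ + √α r₂), h = Q⁻¹(r₁ − M g), v₁ = g + h, and v₂ = −(1/√α) h. Then M v₁ − α K v₂ = r₁ and K v₁ + (M + 2√α K) v₂ = r₂; that is, (v₁, v₂) solves the preconditioner system 𝔅 v = r with 𝔅 = [[M, −α K], [K, M + 2√α K]]. -/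
open Matrix

/-!
Write `s = √α` and `Q = M + s K`, so that `Q g = r₁ + s r₂` and `Q h = r₁ - M g`. The first row
of `𝔅 v` is `M g + (M h + s K h) = M g + Q h = r₁`. The second row, multiplied by `s`, is
`s K g - (M h + s K h) = s K g - Q h = Q g - r₁ = s r₂`.
-/

theorem Matrix.mulVec_nonsing_inv_mulVec {ι R : Type*} [Fintype ι] [DecidableEq ι] [CommRing R]
    {A : Matrix ι ι R} (hA : IsUnit A) (v : ι → R) : A *ᵥ (A⁻¹ *ᵥ v) = v := by
  rw [mulVec_mulVec, mul_nonsing_inv _ ((isUnit_iff_isUnit_det A).1 hA), one_mulVec]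

section PreconditionerRows

variable {ι 𝕜 : Type*} [Fintype ι] [Field 𝕜] (M K : Matrix ι ι 𝕜) {s : 𝕜} {r₁ r₂ g h : ι → 𝕜}

theorem preconditioner_first_row {α : 𝕜} (hsα : s * s = α) (hs : s ≠ 0)
    (hh : (M + s • K) *ᵥ h = r₁ - M *ᵥ g) :
    M *ᵥ (g + h) - α • (K *ᵥ (-(1 / s) • h)) = r₁ := by
  rw [add_mulVec, smul_mulVec] at hh
  rw [← hsα, mulVec_add, mulVec_smul, smul_smul, show s * s * -(1 / s) = -s by field_simp,
    neg_smul, sub_neg_eq_add, add_assoc, hh]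
  abel

theorem preconditioner_second_row (hs : s ≠ 0) (hg : (M + s • K) *ᵥ g = r₁ + s • r₂)
    (hh : (M + s • K) *ᵥ h = r₁ - M *ᵥ g) :
    K *ᵥ (g + h) + (M + (2 * s) • K) *ᵥ (-(1 / s) • h) = r₂ := by
  rw [add_mulVec, smul_mulVec] at hg hh
  rw [mulVec_add, mulVec_smul, add_mulVec, smul_mulVec]
  linear_combination (norm := skip) (1 / s) • hg - (1 / s) • hh
  match_scalars <;> field_simp <;> ring

end PreconditionerRows

/-- Solving the factorized preconditioner system: with `Q = M + √α K` invertible,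
`g = Q⁻¹(r₁ + √α r₂)`, `h = Q⁻¹(r₁ − M g)`, `v₁ = g + h`, `v₂ = −(1/√α) h`, the pair
`(v₁, v₂)` solves `𝔅 v = r` where `𝔅 = [[M, −α K], [K, M + 2√α K]]`. -/
theorem factorized_operator_solves_preconditioner {n : ℕ}
    (M K : Matrix (Fin n) (Fin n) ℝ) (α : ℝ) (hα : 0 < α)
    (hQ : IsUnit (M + Real.sqrt α • K))
    (r₁ r₂ g h v₁ v₂ : Fin n → ℝ)
    (hg : g = (M + Real.sqrt α • K)⁻¹ *ᵥ (r₁ + Real.sqrt α • r₂))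
    (hh : h = (M + Real.sqrt α • K)⁻¹ *ᵥ (r₁ - M *ᵥ g))
    (hv₁ : v₁ = g + h)
    (hv₂ : v₂ = -(1 / Real.sqrt α) • h) :
    M *ᵥ v₁ - α • (K *ᵥ v₂) = r₁ ∧
    K *ᵥ v₁ + (M + (2 * Real.sqrt α) • K) *ᵥ v₂ = r₂ := by
  have hs : Real.sqrt α ≠ 0 := (Real.sqrt_pos.2 hα).ne'
  have hQg : (M + Real.sqrt α • K) *ᵥ g = r₁ + Real.sqrt α • r₂ := by
    rw [hg, mulVec_nonsing_inv_mulVec hQ]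
  have hQh : (M + Real.sqrt α • K) *ᵥ h = r₁ - M *ᵥ g := by
    rw [hh, mulVec_nonsing_inv_mulVec hQ]
  subst hv₁ hv₂
  exact ⟨preconditioner_first_row M K (Real.mul_self_sqrt hα.le) hs hQh,
    preconditioner_second_row M K hs hQg hQh⟩
end

section
/- Let M ∈ ℝ^{n×n} be symmetric positive definite, K ∈ ℝ^{n×n} symmetric positive semidefinite, and α > 0. Define 𝔄 = [[M, −α K], [K, M]] and 𝔅 = [[M, −α K], [K, M + 2√α K]] as 2n×2n block matrices. Then 𝔅 is invertible and every eigenvalue of 𝔅⁻¹ 𝔄 is real and lies in the interval [1/2, 1]. -/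
/-!
Write `v = (x, y)`. If `μ ≠ 1`, the first block row of `𝔄 v = μ 𝔅 v` forces `M x = α K y`, and
pairing the second block row with `x` gives `s = μ (s + t)`, where `s = x⋆Kx + α y⋆Ky` and
`t = 2√α x⋆Ky = (2 / √α) x⋆Mx` are real and nonnegative. Positivity of
`(x - √α y)⋆ K (x - √α y)` gives `t ≤ s`, so `μ = s / (s + t) ∈ [1/2, 1]`. If `s + t = 0`, then
`x = 0` and `K y = 0`, and the second row gives `M y = 0`, so `v = 0`. The same identities
applied to `𝔅 v = 0` show that `𝔅` is injective.
-/

open Matrix RCLike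
open scoped ComplexOrder

lemma eq_zero_of_eq_smul_of_ne_one {R V : Type*} [DivisionRing R] [AddCommGroup V] [Module R V]
    {μ : R} {w : V} (hμ : μ ≠ 1) (h : w = μ • w) : w = 0 := by
  have : (1 - μ) • w = 0 := by rw [sub_smul, one_smul, ← h, sub_self]
  exact (smul_eq_zero.mp this).resolve_left (sub_ne_zero.mpr hμ.symm)

lemma RCLike.im_eq_zero_and_re_mem_Icc_of_ofReal_eq_mul {𝕜 : Type*} [RCLike 𝕜] {s t : ℝ} {μ : 𝕜}
    (ht : 0 ≤ t) (hts : t ≤ s) (hst : s + t ≠ 0) (h : (s : 𝕜) = μ * (s + t : ℝ)) :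
    im μ = 0 ∧ re μ ∈ Set.Icc (1 / 2 : ℝ) 1 := by
  have hμ : μ = ((s / (s + t) : ℝ) : 𝕜) := by
    rw [ofReal_div, h, mul_div_cancel_right₀ _ (ofReal_ne_zero.mpr hst)]
  have hpos : 0 < s + t := lt_of_le_of_ne (by linarith) hst.symm
  rw [hμ, ofReal_im, ofReal_re, Set.mem_Icc, le_div_iff₀ hpos, div_le_one hpos]
  exact ⟨rfl, by linarith, by linarith⟩

namespace Matrix

section RCLike

variable {𝕜 ι : Type*} [RCLike 𝕜] [Fintype ι] {M K : Matrix ι ι 𝕜}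

lemma IsHermitian.ofReal_re_star_dotProduct_mulVec_self (hM : M.IsHermitian) (x : ι → 𝕜) :
    (re (star x ⬝ᵥ M *ᵥ x) : 𝕜) = star x ⬝ᵥ M *ᵥ x :=
  conj_eq_iff_re.mp (conj_eq_iff_im.mpr (hM.im_star_dotProduct_mulVec_self x))

lemma IsHermitian.star_dotProduct_mulVec (hM : M.IsHermitian) (x y : ι → 𝕜) :
    star (star x ⬝ᵥ M *ᵥ y) = star y ⬝ᵥ M *ᵥ x := by
  rw [star_dotProduct y, star_mulVec, ← dotProduct_mulVec, hM.eq]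

lemma PosSemidef.two_mul_re_dotProduct_mulVec_le (hK : K.PosSemidef) (x y : ι → 𝕜) (t : ℝ) :
    2 * t * re (star x ⬝ᵥ K *ᵥ y) ≤
      re (star x ⬝ᵥ K *ᵥ x) + t ^ 2 * re (star y ⬝ᵥ K *ᵥ y) := by
  have h := hK.re_dotProduct_nonneg (x - t • y)
  have hyx : re (star y ⬝ᵥ K *ᵥ x) = re (star x ⬝ᵥ K *ᵥ y) := by
    rw [← hK.isHermitian.star_dotProduct_mulVec, star_def, conj_re]
  simp only [star_sub, star_smul, mulVec_sub, mulVec_smul, sub_dotProduct, dotProduct_sub,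
    smul_dotProduct, dotProduct_smul, map_sub, star_trivial, smul_re, hyx] at h
  linarith

theorem PosDef.exists_real_dotProduct_eq_of_mulVec_eq (hM : M.PosDef) (hK : K.PosSemidef)
    {α : ℝ} (hα : 0 < α) {x y : ι → 𝕜} (h : M *ᵥ x = α • K *ᵥ y) :
    ∃ s t : ℝ, star x ⬝ᵥ (K *ᵥ x + M *ᵥ y) = s ∧
      star x ⬝ᵥ (K *ᵥ x + (M + (2 * √α) • K) *ᵥ y) = (s + t : ℝ) ∧
      0 ≤ t ∧ t ≤ s ∧ (s + t = 0 → x = 0 ∧ K *ᵥ y = 0) := by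
  set a := re (star x ⬝ᵥ K *ᵥ x)
  set b := re (star y ⬝ᵥ K *ᵥ y)
  have hxMx : star x ⬝ᵥ M *ᵥ x = α • (star x ⬝ᵥ K *ᵥ y) := by rw [h, dotProduct_smul]
  have hxKy : star x ⬝ᵥ K *ᵥ y = ((α⁻¹ * re (star x ⬝ᵥ M *ᵥ x) : ℝ) : 𝕜) := by
    rw [ofReal_mul, hM.isHermitian.ofReal_re_star_dotProduct_mulVec_self, hxMx,
      real_smul_eq_coe_mul, ← mul_assoc, ← ofReal_mul, inv_mul_cancel₀ hα.ne', ofReal_one, one_mul]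
  set c := α⁻¹ * re (star x ⬝ᵥ M *ᵥ x)
  have hcm : α * c = re (star x ⬝ᵥ M *ᵥ x) := by
    rw [← mul_assoc, mul_inv_cancel₀ hα.ne', one_mul]
  have hxMy : star x ⬝ᵥ M *ᵥ y = ((α * b : ℝ) : 𝕜) := by
    rw [← hM.isHermitian.star_dotProduct_mulVec, h, dotProduct_smul, star_smul, star_trivial,
      ← hK.isHermitian.ofReal_re_star_dotProduct_mulVec_self, real_smul_eq_coe_mul, star_def,
      conj_ofReal, ofReal_mul]
  have ha : 0 ≤ a := hK.re_dotProduct_nonneg x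
  have hb : 0 ≤ b := hK.re_dotProduct_nonneg y
  have hc : 0 ≤ c :=
    nonneg_of_mul_nonneg_right (hcm ▸ hM.posSemidef.re_dotProduct_nonneg x) hα
  have hcs : 2 * √α * c ≤ a + α * b := by
    simpa [hxKy, Real.sq_sqrt hα.le] using hK.two_mul_re_dotProduct_mulVec_le x y √α
  refine ⟨a + α * b, 2 * √α * c, ?_, ?_, by positivity, hcs, fun h0 ↦ ⟨?_, ?_⟩⟩
  · rw [dotProduct_add, hxMy, ← hK.isHermitian.ofReal_re_star_dotProduct_mulVec_self]
    push_cast; ring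
  · rw [add_mulVec, smul_mulVec, dotProduct_add, dotProduct_add, dotProduct_smul, hxMy, hxKy,
      ← hK.isHermitian.ofReal_re_star_dotProduct_mulVec_self, real_smul_eq_coe_mul]
    push_cast; ring
  · have hc0 : c = 0 := by nlinarith [Real.sqrt_pos.mpr hα]
    by_contra hx
    have := hM.re_dotProduct_pos hx
    rw [← hcm, hc0, mul_zero] at this
    exact lt_irrefl 0 this
  · have hb0 : b = 0 := by nlinarith [mul_nonneg (Real.sqrt_nonneg α) hc]
    rw [← hK.dotProduct_mulVec_zero_iff, ← hK.isHermitian.ofReal_re_star_dotProduct_mulVec_self]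
    exact congrArg ofReal hb0 |>.trans ofReal_zero

variable [DecidableEq ι]

theorem PosDef.isUnit_fromBlocks (hM : M.PosDef) (hK : K.PosSemidef) {α : ℝ} (hα : 0 < α) :
    IsUnit (fromBlocks M (-(α • K)) K (M + (2 * √α) • K)) := by
  rw [isUnit_iff_isUnit_det, isUnit_iff_ne_zero]
  intro hdet
  obtain ⟨v, hv0, hv⟩ := exists_mulVec_eq_zero_iff.mpr hdet
  set x := v ∘ Sum.inl
  set y := v ∘ Sum.inr
  rw [fromBlocks_mulVec] at hv
  have h1 : M *ᵥ x = α • K *ᵥ y := by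
    have hrow : M *ᵥ x + -(α • K) *ᵥ y = 0 := funext fun i ↦ congrFun hv (Sum.inl i)
    simpa [neg_mulVec, smul_mulVec, add_neg_eq_zero] using hrow
  have h2 : K *ᵥ x + (M + (2 * √α) • K) *ᵥ y = 0 := funext fun i ↦ congrFun hv (Sum.inr i)
  obtain ⟨s, t, -, hD, -, -, hdeg⟩ := hM.exists_real_dotProduct_eq_of_mulVec_eq hK hα h1
  obtain ⟨hx, hKy⟩ := hdeg (by rwa [h2, dotProduct_zero, eq_comm, ofReal_eq_zero] at hD)
  have hy : y = 0 := by
    refine mulVec_injective_of_isUnit hM.isUnit ?_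
    simpa [hx, hKy, add_mulVec, smul_mulVec] using h2
  exact hv0 (funext fun | .inl i => congrFun hx i | .inr i => congrFun hy i)

theorem PosDef.im_eq_zero_and_re_mem_Icc_of_mulVec_eq_smul_mulVec (hM : M.PosDef)
    (hK : K.PosSemidef) {α : ℝ} (hα : 0 < α) {μ : 𝕜} {v : ι ⊕ ι → 𝕜} (hv0 : v ≠ 0)
    (hv : fromBlocks M (-(α • K)) K M *ᵥ v =
      μ • (fromBlocks M (-(α • K)) K (M + (2 * √α) • K) *ᵥ v)) :
    im μ = 0 ∧ re μ ∈ Set.Icc (1 / 2 : ℝ) 1 := by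
  rcases eq_or_ne μ 1 with rfl | hμ
  · norm_num
  set x := v ∘ Sum.inl
  set y := v ∘ Sum.inr
  rw [fromBlocks_mulVec, fromBlocks_mulVec] at hv
  have h1 : M *ᵥ x = α • K *ᵥ y := by
    have hrow : M *ᵥ x + -(α • K) *ᵥ y = μ • (M *ᵥ x + -(α • K) *ᵥ y) :=
      funext fun i ↦ congrFun hv (Sum.inl i)
    simpa [neg_mulVec, smul_mulVec, add_neg_eq_zero] using eq_zero_of_eq_smul_of_ne_one hμ hrow
  have h2 : K *ᵥ x + M *ᵥ y = μ • (K *ᵥ x + (M + (2 * √α) • K) *ᵥ y) :=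
    funext fun i ↦ congrFun hv (Sum.inr i)
  obtain ⟨s, t, hS, hD, ht, hts, hdeg⟩ := hM.exists_real_dotProduct_eq_of_mulVec_eq hK hα h1
  refine im_eq_zero_and_re_mem_Icc_of_ofReal_eq_mul ht hts (fun hst ↦ hv0 ?_) ?_
  · obtain ⟨hx, hKy⟩ := hdeg hst
    simp only [hx, mulVec_zero, zero_add, add_mulVec, smul_mulVec, hKy, smul_zero, add_zero] at h2
    have hy : y = 0 :=
      mulVec_injective_of_isUnit hM.isUnit (by simpa using eq_zero_of_eq_smul_of_ne_one hμ h2)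
    exact funext fun | .inl i => congrFun hx i | .inr i => congrFun hy i
  · rw [← hS, ← hD, h2, dotProduct_smul, smul_eq_mul]

end RCLike

section ofReal

variable {m n : Type*}

lemma map_ofReal_smul (r : ℝ) (L : Matrix m n ℝ) :
    (r • L).map ((↑) : ℝ → ℂ) = r • L.map (↑) :=
  Matrix.map_smul _ r (fun a ↦ by simp [Complex.real_smul]) L

variable [Fintype n]

lemma PosSemidef.map_ofReal {K : Matrix n n ℝ} (hK : K.PosSemidef) :
    (K.map ((↑) : ℝ → ℂ)).PosSemidef := by
  classical
  obtain ⟨B, rfl⟩ : ∃ B : Matrix n n ℝ, K = star B * B := by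
    open scoped MatrixOrder in exact CStarAlgebra.nonneg_iff_eq_star_mul_self.mp hK.nonneg
  rw [show ((↑) : ℝ → ℂ) = Complex.ofRealHom from rfl, Matrix.map_mul, star_eq_conjTranspose,
    conjTranspose_map (⇑Complex.ofRealHom) fun _ ↦ (Complex.conj_ofReal _).symm]
  exact posSemidef_conjTranspose_mul_self _

lemma PosDef.map_ofReal [DecidableEq n] {M : Matrix n n ℝ} (hM : M.PosDef) :
    (M.map ((↑) : ℝ → ℂ)).PosDef :=
  hM.posSemidef.map_ofReal.posDef_iff_isUnit.mpr (hM.isUnit.map Complex.ofRealHom.mapMatrix)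

end ofReal

lemma map_mulVec_eq_smul_of_isUnit {n R S : Type*} [Fintype n] [DecidableEq n]
    [CommRing R] [CommRing S] (f : R →+* S) {A B : Matrix n n R} (hB : IsUnit B) {μ : S}
    {v : n → S} (h : (B⁻¹ * A).map f *ᵥ v = μ • v) : A.map f *ᵥ v = μ • (B.map f *ᵥ v) := by
  rw [← mul_nonsing_inv_cancel_left B A ((isUnit_iff_isUnit_det B).mp hB), Matrix.map_mul,
    ← mulVec_mulVec, h, mulVec_smul]

end Matrix

/-- For `M` symmetric positive definite, `K` symmetric positive semidefinite and `α > 0`,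
the preconditioner `𝔅 = [[M, −αK], [K, M + 2√α K]]` is invertible and every eigenvalue of
`𝔅⁻¹𝔄`, where `𝔄 = [[M, −αK], [K, M]]`, is real and lies in `[1/2, 1]`. -/
theorem preconditioned_matrix_eigenvalues {n : ℕ}
    (M K : Matrix (Fin n) (Fin n) ℝ) (hM : M.PosDef) (hK : K.PosSemidef)
    (α : ℝ) (hα : 0 < α) :
    IsUnit (fromBlocks M (-(α • K)) K (M + (2 * Real.sqrt α) • K)) ∧
    ∀ (μ : ℂ) (v : (Fin n ⊕ Fin n) → ℂ), v ≠ 0 →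
      (((fromBlocks M (-(α • K)) K (M + (2 * Real.sqrt α) • K))⁻¹
          * fromBlocks M (-(α • K)) K M).map ((↑) : ℝ → ℂ)) *ᵥ v = μ • v →
      μ.im = 0 ∧ (1 : ℝ)/2 ≤ μ.re ∧ μ.re ≤ 1 := by
  have hB := hM.isUnit_fromBlocks hK hα
  refine ⟨hB, fun μ v hv0 hv ↦ ?_⟩
  have hpencil := map_mulVec_eq_smul_of_isUnit Complex.ofRealHom hB hv
  simp only [show ⇑Complex.ofRealHom = ((↑) : ℝ → ℂ) from rfl, fromBlocks_map,
    Matrix.map_neg _ Complex.ofReal_neg, Matrix.map_add _ Complex.ofReal_add,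
    map_ofReal_smul] at hpencil
  exact hM.map_ofReal.im_eq_zero_and_re_mem_Icc_of_mulVec_eq_smul_mulVec hK.map_ofReal hα hv0
    hpencil
end

section
/- Weak duality between the discretized problem and its dual: let M ∈ ℝ^{n×n} be symmetric positive definite, K ∈ ℝ^{n×n}, α > 0, y_d, f ∈ ℝ^n, and let C, S ⊆ ℝ^n be nonempty closed convex sets. For every (y, u) ∈ ℝ^n × ℝ^n satisfying K y = M u + M f, y ∈ C and u ∈ S, and for every (p, λ, μ) ∈ ℝ^n × ℝ^n × ℝ^n, it holds that (1/2)(y − y_d)ᵀ M (y − y_d) + (α/2) uᵀ M u ≥ −F(p, λ, μ), where F(p, λ, μ) = (1/2)(Kᵀ p + λ − M y_d)ᵀ M⁻¹ (Kᵀ p + λ − M y_d) + (1/(2α))(M p − μ)ᵀ M⁻¹ (M p − μ) + δ*_C(λ) + δ*_S(μ) + ⟨M f, p⟩ − (1/2) y_dᵀ M y_d. -/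
open Matrix

/-- The support function `δ*_B(lam) = sup_{z ∈ B} ⟨lam, z⟩` of a set `B ⊆ ℝ^n`,
with values in `EReal`. -/
noncomputable def suppFn {n : ℕ} (B : Set (Fin n → ℝ)) (lam : Fin n → ℝ) : EReal :=
  ⨆ z : B, ((lam ⬝ᵥ (z : Fin n → ℝ) : ℝ) : EReal)

/-!
Weak duality is the Fenchel–Young inequality for the quadratic norm of `M`: for `c > 0`,
`⟨a, x⟩ ≤ (c/2) xᵀMx + (1/(2c)) aᵀM⁻¹a`, the expansion of `(c x - M⁻¹a)ᵀ M (c x - M⁻¹a) ≥ 0`.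
Applied to `(Kᵀp + λ - M y_d, -y)` with `c = 1` and to `(Mp - μ, u)` with `c = α`, the cross terms
`⟨Kᵀp, y⟩ - ⟨Mp, u⟩` that remain are `⟨Mf, p⟩` by the state equation. This bounds `-F` by the
primal cost up to `⟨λ, y⟩ + ⟨μ, u⟩`, which the support functions dominate since `y ∈ C`, `u ∈ S`.
-/

namespace Matrix

variable {ι : Type*} {M : Matrix ι ι ℝ}

lemma PosDef.isSymm (hM : M.PosDef) : M.IsSymm :=
  isHermitian_iff_isSymm.mp hM.isHermitian

variable [Fintype ι]

lemma IsSymm.dotProduct_mulVec_comm (hM : M.IsSymm) (x z : ι → ℝ) :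
    x ⬝ᵥ M *ᵥ z = z ⬝ᵥ M *ᵥ x := by
  rw [← dotProduct_transpose_mulVec M z x, hM.eq]

lemma IsSymm.dotProduct_mulVec_sub_sub (hM : M.IsSymm) (x z : ι → ℝ) :
    (x - z) ⬝ᵥ M *ᵥ (x - z) = x ⬝ᵥ M *ᵥ x - 2 * (x ⬝ᵥ M *ᵥ z) + z ⬝ᵥ M *ᵥ z := by
  simp only [mulVec_sub, dotProduct_sub, sub_dotProduct, hM.dotProduct_mulVec_comm z x]
  ring

theorem PosDef.young_inequality [DecidableEq ι] (hM : M.PosDef) {c : ℝ} (hc : 0 < c)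
    (a x : ι → ℝ) :
    a ⬝ᵥ x ≤ c / 2 * (x ⬝ᵥ M *ᵥ x) + 1 / (2 * c) * (a ⬝ᵥ M⁻¹ *ᵥ a) := by
  set w := M⁻¹ *ᵥ a
  have hMw : M *ᵥ w = a := by
    rw [mulVec_mulVec, mul_nonsing_inv _ (hM.isUnit.map detMonoidHom), one_mulVec]
  have gap : c / 2 * (x ⬝ᵥ M *ᵥ x) + 1 / (2 * c) * (a ⬝ᵥ w) - a ⬝ᵥ x
      = (c • x - w) ⬝ᵥ M *ᵥ (c • x - w) / (2 * c) := by
    rw [hM.isSymm.dotProduct_mulVec_sub_sub, hMw]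
    simp only [mulVec_smul, dotProduct_smul, smul_dotProduct, smul_eq_mul,
      dotProduct_comm x a, dotProduct_comm w a]
    field_simp
    ring
  have hsq : 0 ≤ (c • x - w) ⬝ᵥ M *ᵥ (c • x - w) := hM.posSemidef.dotProduct_mulVec_nonneg _
  linarith [div_nonneg hsq (by positivity : (0 : ℝ) ≤ 2 * c)]

end Matrix

lemma dotProduct_le_suppFn {n : ℕ} {B : Set (Fin n → ℝ)} {z : Fin n → ℝ} (hz : z ∈ B)
    (lam : Fin n → ℝ) : ((lam ⬝ᵥ z : ℝ) : EReal) ≤ suppFn B lam :=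
  le_iSup (fun z : B => ((lam ⬝ᵥ (z : Fin n → ℝ) : ℝ) : EReal)) ⟨z, hz⟩

lemma EReal.neg_coe_add_add_le_coe {r a b s : ℝ} {A B : EReal} (ha : (a : EReal) ≤ A)
    (hb : (b : EReal) ≤ B) (h : -(r + a + b) ≤ s) : -((r : EReal) + A + B) ≤ s :=
  calc -((r : EReal) + A + B) ≤ -((r : EReal) + a + b) := EReal.neg_le_neg_iff.mpr (by gcongr)
    _ = ((-(r + a + b) : ℝ) : EReal) := by norm_cast
    _ ≤ s := EReal.coe_le_coe_iff.mpr h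

theorem weak_duality_with_pairings {ι : Type*} [Fintype ι] [DecidableEq ι]
    (M K : Matrix ι ι ℝ) (hM : M.PosDef) (α : ℝ) (hα : 0 < α) (yd f y u : ι → ℝ)
    (hfeas : K *ᵥ y = M *ᵥ u + M *ᵥ f) (p lam mu : ι → ℝ) :
    -((1 : ℝ)/2 * ((Kᵀ *ᵥ p + lam - M *ᵥ yd) ⬝ᵥ (M⁻¹ *ᵥ (Kᵀ *ᵥ p + lam - M *ᵥ yd)))
        + (1 : ℝ)/(2*α) * ((M *ᵥ p - mu) ⬝ᵥ (M⁻¹ *ᵥ (M *ᵥ p - mu)))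
        + (M *ᵥ f) ⬝ᵥ p - (1 : ℝ)/2 * (yd ⬝ᵥ (M *ᵥ yd))
        + lam ⬝ᵥ y + mu ⬝ᵥ u)
    ≤ (1 : ℝ)/2 * ((y - yd) ⬝ᵥ (M *ᵥ (y - yd))) + α/2 * (u ⬝ᵥ (M *ᵥ u)) := by
  set a := Kᵀ *ᵥ p + lam - M *ᵥ yd
  set b := M *ᵥ p - mu
  have hy : -(a ⬝ᵥ y) ≤ 1 / 2 * (y ⬝ᵥ M *ᵥ y) + 1 / 2 * (a ⬝ᵥ M⁻¹ *ᵥ a) := by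
    have h := hM.young_inequality one_pos a (-y)
    simp only [dotProduct_neg, mulVec_neg, neg_dotProduct, neg_neg] at h
    linarith
  have hu := hM.young_inequality hα b u
  have ha : a ⬝ᵥ y = p ⬝ᵥ K *ᵥ y + lam ⬝ᵥ y - y ⬝ᵥ M *ᵥ yd := by
    rw [sub_dotProduct, add_dotProduct, dotProduct_comm, dotProduct_transpose_mulVec,
      dotProduct_comm (M *ᵥ yd)]
  have hb : b ⬝ᵥ u = p ⬝ᵥ M *ᵥ u - mu ⬝ᵥ u := by
    rw [sub_dotProduct, dotProduct_comm, hM.isSymm.dotProduct_mulVec_comm]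
  have hf : (M *ᵥ f) ⬝ᵥ p = p ⬝ᵥ K *ᵥ y - p ⬝ᵥ M *ᵥ u := by
    rw [← dotProduct_sub, hfeas, add_sub_cancel_left, dotProduct_comm]
  rw [hM.isSymm.dotProduct_mulVec_sub_sub, hf]
  linarith

theorem weak_duality_discretized_general {n : ℕ}
    (M K : Matrix (Fin n) (Fin n) ℝ) (hM : M.PosDef)
    (α : ℝ) (hα : 0 < α)
    (yd f : Fin n → ℝ)
    (C S : Set (Fin n → ℝ))
    (y u : Fin n → ℝ)
    (hfeas : K *ᵥ y = M *ᵥ u + M *ᵥ f) (hyC : y ∈ C) (huS : u ∈ S)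
    (p lam mu : Fin n → ℝ) :
    -((((1 : ℝ)/2 * ((Kᵀ *ᵥ p + lam - M *ᵥ yd) ⬝ᵥ (M⁻¹ *ᵥ (Kᵀ *ᵥ p + lam - M *ᵥ yd)))
        + (1 : ℝ)/(2*α) * ((M *ᵥ p - mu) ⬝ᵥ (M⁻¹ *ᵥ (M *ᵥ p - mu)))
        + (M *ᵥ f) ⬝ᵥ p - (1 : ℝ)/2 * (yd ⬝ᵥ (M *ᵥ yd)) : ℝ) : EReal)
      + suppFn C lam + suppFn S mu)
    ≤ (((1 : ℝ)/2 * ((y - yd) ⬝ᵥ (M *ᵥ (y - yd))) + α/2 * (u ⬝ᵥ (M *ᵥ u)) : ℝ) : EReal) :=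
  EReal.neg_coe_add_add_le_coe (dotProduct_le_suppFn hyC lam) (dotProduct_le_suppFn huS mu)
    (weak_duality_with_pairings M K hM α hα yd f y u hfeas p lam mu)

/-- Weak duality between the discretized problem and its dual: for every primal feasible
`(y, u)` and every `(p, λ, μ)`, `J(y, u) ≥ −F(p, λ, μ)`. -/
theorem weak_duality_discretized {n : ℕ}
    (M K : Matrix (Fin n) (Fin n) ℝ) (hM : M.PosDef)
    (α : ℝ) (hα : 0 < α)
    (yd f : Fin n → ℝ)
    (C S : Set (Fin n → ℝ))
    (hCne : C.Nonempty) (hCcl : IsClosed C) (hCconv : Convex ℝ C)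
    (hSne : S.Nonempty) (hScl : IsClosed S) (hSconv : Convex ℝ S)
    (y u : Fin n → ℝ)
    (hfeas : K *ᵥ y = M *ᵥ u + M *ᵥ f) (hyC : y ∈ C) (huS : u ∈ S)
    (p lam mu : Fin n → ℝ) :
    -((((1 : ℝ)/2 * ((Kᵀ *ᵥ p + lam - M *ᵥ yd) ⬝ᵥ (M⁻¹ *ᵥ (Kᵀ *ᵥ p + lam - M *ᵥ yd)))
        + (1 : ℝ)/(2*α) * ((M *ᵥ p - mu) ⬝ᵥ (M⁻¹ *ᵥ (M *ᵥ p - mu)))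
        + (M *ᵥ f) ⬝ᵥ p - (1 : ℝ)/2 * (yd ⬝ᵥ (M *ᵥ yd)) : ℝ) : EReal)
      + suppFn C lam + suppFn S mu)
    ≤ (((1 : ℝ)/2 * ((y - yd) ⬝ᵥ (M *ᵥ (y - yd))) + α/2 * (u ⬝ᵥ (M *ᵥ u)) : ℝ) : EReal) :=
  weak_duality_discretized_general M K hM α hα yd f C S y u hfeas hyC huS p lam mu
end
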